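/- Let V = ℝ² and identify g² with a space of V-valued symmetric bilinear forms on V via (X^i_{jk}) ↦ B where B(v, w)^i = Σ_{j,k} X^i_{jk} v^j w^k. The linear map sending f ∈ Hom(V, g²) to the alternating bilinear map (v, w) ↦ f(w)(v, ·) − f(v)(w, ·), with values in Hom(V, V), is a linear isomorphism from Hom(V, g²) onto the space of alternating bilinear maps V × V → Hom(V, V). (This is the exactness of the Spencer complex 0 = (g²)⁽¹⁾ → g² ⊗ V* → (V ⊗ V*) ⊗ Λ²V* → 0.) -/

import Mathlib

/- STATEMENT 9: exactness of the Spencer complex 0 = (g²)⁽¹⁾ → g² ⊗ V* → (V ⊗ V*) ⊗ Λ²V* → 0: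
   the map sending f ∈ Hom(V, g²) to the alternating bilinear Hom(V,V)-valued map
   (v, w) ↦ f(w)(v, ·) − f(v)(w, ·) is a linear isomorphism onto the space of alternating
   bilinear maps V × V → Hom(V, V). -/

/-- The space g² of arrays (X^i_{jk}), symmetric in the lower indices, satisfying
X²₁₁ = 0, X¹₁₁ − 2X²₁₂ = 0, 2X¹₁₂ − X²₂₂ = 0, X¹₂₂ = 0.
(Index value `0` stands for `1`, index value `1` stands for `2`.) -/
def g2 : Submodule ℝ (Fin 2 → Fin 2 → Fin 2 → ℝ) where
  carrier := {X | (∀ i j k, X i j k = X i k j) ∧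
    X 1 0 0 = 0 ∧ X 0 0 0 - 2 * X 1 0 1 = 0 ∧ 2 * X 0 0 1 - X 1 1 1 = 0 ∧ X 0 1 1 = 0}
  add_mem' := by
    rintro X Y ⟨hs, h1, h2, h3, h4⟩ ⟨hs', h1', h2', h3', h4'⟩
    refine ⟨fun i j k => ?_, ?_, ?_, ?_, ?_⟩ <;>
      simp only [Pi.add_apply] <;>
      first
        | rw [hs i j k, hs' i j k]
        | linarith
  zero_mem' := ⟨fun i j k => rfl, by norm_num, by norm_num, by norm_num, by norm_num⟩
  smul_mem' := by
    rintro c X ⟨hs, h1, h2, h3, h4⟩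
    refine ⟨fun i j k => ?_, ?_, ?_, ?_, ?_⟩ <;>
      simp only [Pi.smul_apply, smul_eq_mul] <;>
      first
        | rw [hs i j k]
        | linear_combination c * h1
        | linear_combination c * h2
        | linear_combination c * h3
        | linear_combination c * h4

/-- The V-valued bilinear form associated to an array: B(v,w)^i = Σ_{j,k} X^i_{jk} v^j w^k. -/
def B (X : Fin 2 → Fin 2 → Fin 2 → ℝ) (v w : Fin 2 → ℝ) : Fin 2 → ℝ :=
  fun i => ∑ j, ∑ k, X i j k * v j * w k

/-- The Spencer operator: f ↦ ((v, w) ↦ f(w)(v, ·) − f(v)(w, ·)), the value on a vector u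
being B(f w)(v, u) − B(f v)(w, u). -/
def D (f : (Fin 2 → ℝ) →ₗ[ℝ] g2) (v w u : Fin 2 → ℝ) : Fin 2 → ℝ :=
  B (f w).1 v u - B (f v).1 w u

/-!
The four equations cut `g²` down to the plane of arrays determined by `a = X¹₁₂` and `c = X²₁₂`.
An alternating bilinear map on `ℝ²` is `det (v, w)` times its value on `(e₁, e₂)`, and `D f` is
alternating, so `D f` is determined by the endomorphism `D f (e₁, e₂)` of `V`. Its matrix depends
linearly on the four parameters of `f e₁` and `f e₂`, through a map `ℝ⁴ → ℝ⁴` that is invertible;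
this gives injectivity and surjectivity at once.
-/

open scoped Matrix

theorem LinearMap.apply_eq_sum_fin_two {R M : Type*} [CommSemiring R] [AddCommMonoid M]
    [Module R M] (f : (Fin 2 → R) →ₗ[R] M) (v : Fin 2 → R) :
    f v = v 0 • f (Pi.single 0 1) + v 1 • f (Pi.single 1 1) := by
  conv_lhs => rw [pi_eq_sum_univ' v, Fin.sum_univ_two, map_add, map_smul, map_smul]

theorem LinearMap.IsAlt.apply_eq_fin_two {R M : Type*} [CommRing R] [AddCommGroup M] [Module R M]
    {b : (Fin 2 → R) →ₗ[R] (Fin 2 → R) →ₗ[R] M} (hb : b.IsAlt) (v w : Fin 2 → R) :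
    b v w = (v 0 * w 1 - v 1 * w 0) • b (Pi.single 0 1) (Pi.single 1 1) := by
  rw [b.apply_eq_sum_fin_two v, LinearMap.add_apply, LinearMap.smul_apply, LinearMap.smul_apply,
    (b _).apply_eq_sum_fin_two w, (b (Pi.single 1 1)).apply_eq_sum_fin_two w, hb, hb, ← hb.neg]
  module

/-- The element of `g2` with `X¹₁₂ = a` and `X²₁₂ = c`. -/
def g2Of (a c : ℝ) : g2 :=
  ⟨![![![2 * c, a], ![a, 0]], ![![0, c], ![c, 2 * a]]], by
    refine ⟨fun i j k => ?_, ?_, ?_, ?_, ?_⟩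
    · fin_cases i <;> fin_cases j <;> fin_cases k <;> rfl
    all_goals simp⟩

theorem g2Of_coords (X : g2) : g2Of (X.1 0 0 1) (X.1 1 0 1) = X := by
  obtain ⟨X, hsymm, h100, h000, h111, h011⟩ := X
  ext i j k
  fin_cases i <;> fin_cases j <;> fin_cases k <;> simp [g2Of] <;>
    linarith [hsymm 0 0 1, hsymm 1 0 1]

/-- The matrix of `D f (e₁, e₂)` when `f e₁ = X` and `f e₂ = Y` (see `D_apply`). -/
def spencerMatrix (X Y : g2) : Matrix (Fin 2) (Fin 2) ℝ :=
  !![2 * Y.1 1 0 1 - X.1 0 0 1, Y.1 0 0 1; -X.1 1 0 1, Y.1 1 0 1 - 2 * X.1 0 0 1]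

theorem spencerMatrix_injective : Function.Injective (Function.uncurry spencerMatrix) := by
  rintro ⟨X, Y⟩ ⟨X', Y'⟩ h
  have h00 := congrFun (congrFun h 0) 0
  have h01 := congrFun (congrFun h 0) 1
  have h10 := congrFun (congrFun h 1) 0
  have h11 := congrFun (congrFun h 1) 1
  simp only [Function.uncurry_apply_pair, spencerMatrix, Matrix.of_apply, Matrix.cons_val',
    Matrix.cons_val_zero, Matrix.cons_val_one, Matrix.empty_val', Matrix.cons_val_fin_one]
    at h00 h01 h10 h11
  rw [← g2Of_coords X, ← g2Of_coords Y, ← g2Of_coords X', ← g2Of_coords Y']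
  congr 2 <;> linarith

theorem spencerMatrix_surjective : Function.Surjective (Function.uncurry spencerMatrix) := by
  intro M
  refine ⟨(g2Of ((M 0 0 - 2 * M 1 1) / 3) (-M 1 0), g2Of (M 0 1) ((2 * M 0 0 - M 1 1) / 3)), ?_⟩
  ext i j
  fin_cases i <;> fin_cases j <;> simp [spencerMatrix, g2Of] <;> ring

theorem D_apply (f : (Fin 2 → ℝ) →ₗ[ℝ] g2) (v w u : Fin 2 → ℝ) :
    D f v w u = (v 0 * w 1 - v 1 * w 0) •
      (spencerMatrix (f (Pi.single 0 1)) (f (Pi.single 1 1)) *ᵥ u) := by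
  rw [D, f.apply_eq_sum_fin_two v, f.apply_eq_sum_fin_two w,
    ← g2Of_coords (f (Pi.single 0 1)), ← g2Of_coords (f (Pi.single 1 1))]
  ext i
  fin_cases i <;> simp [B, g2Of, spencerMatrix, dotProduct, Fin.sum_univ_two] <;> ring

theorem D_add (f g : (Fin 2 → ℝ) →ₗ[ℝ] g2) :
    D (f + g) = fun v w u => D f v w u + D g v w u := by
  funext v w u i
  simp only [D, B, LinearMap.add_apply, Submodule.coe_add, Pi.add_apply, Pi.sub_apply,
    add_mul, Finset.sum_add_distrib]
  ring

theorem D_smul (c : ℝ) (f : (Fin 2 → ℝ) →ₗ[ℝ] g2) :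
    D (c • f) = fun v w u => c • D f v w u := by
  funext v w u i
  simp only [D, B, LinearMap.smul_apply, Submodule.coe_smul, Pi.smul_apply, Pi.sub_apply,
    smul_eq_mul, mul_assoc, ← Finset.mul_sum, mul_sub]

theorem D_injective : Function.Injective D := by
  intro f g h
  have hmat : spencerMatrix (f (Pi.single 0 1)) (f (Pi.single 1 1)) =
      spencerMatrix (g (Pi.single 0 1)) (g (Pi.single 1 1)) := by
    refine Matrix.ext_of_mulVec_single fun j => ?_
    simpa [D_apply] using congrFun (congrFun (congrFun h (Pi.single 0 1)) (Pi.single 1 1))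
      (Pi.single j 1)
  obtain ⟨h0, h1⟩ := Prod.mk.inj (spencerMatrix_injective (a₁ := (_, _)) (a₂ := (_, _)) hmat)
  refine LinearMap.ext fun v => ?_
  rw [f.apply_eq_sum_fin_two, g.apply_eq_sum_fin_two, h0, h1]

theorem exists_D_eq_of_isAlt
    {b : (Fin 2 → ℝ) →ₗ[ℝ] (Fin 2 → ℝ) →ₗ[ℝ] (Fin 2 → ℝ) →ₗ[ℝ] (Fin 2 → ℝ)} (hb : b.IsAlt) :
    ∃ f : (Fin 2 → ℝ) →ₗ[ℝ] g2, ∀ v w u, D f v w u = b v w u := by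
  obtain ⟨⟨X, Y⟩, hXY⟩ :=
    spencerMatrix_surjective (LinearMap.toMatrix' (b (Pi.single 0 1) (Pi.single 1 1)))
  refine ⟨Fintype.linearCombination ℝ ![X, Y], fun v w u => ?_⟩
  have hX : Fintype.linearCombination ℝ ![X, Y] (Pi.single 0 1) = X := by simp
  have hY : Fintype.linearCombination ℝ ![X, Y] (Pi.single 1 1) = Y := by simp
  rw [D_apply, hX, hY, hb.apply_eq_fin_two, LinearMap.smul_apply]
  exact congrArg _ ((congrArg (· *ᵥ u) hXY).trans (LinearMap.toMatrix'_mulVec _ u))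

/-- The Spencer operator is linear, injective, and surjective onto the space of
alternating bilinear maps V × V → Hom(V, V) (the latter represented by trilinear maps
alternating in the first two arguments). -/
theorem stmt9 :
    (∀ f g : (Fin 2 → ℝ) →ₗ[ℝ] g2, D (f + g) = fun v w u => D f v w u + D g v w u) ∧
    (∀ (c : ℝ) (f : (Fin 2 → ℝ) →ₗ[ℝ] g2), D (c • f) = fun v w u => c • D f v w u) ∧
    Function.Injective D ∧
    (∀ b : (Fin 2 → ℝ) →ₗ[ℝ] (Fin 2 → ℝ) →ₗ[ℝ] (Fin 2 → ℝ) →ₗ[ℝ] (Fin 2 → ℝ),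
      (∀ v, b v v = 0) →
        ∃ f : (Fin 2 → ℝ) →ₗ[ℝ] g2, ∀ v w u, D f v w u = b v w u) :=
  ⟨D_add, D_smul, D_injective, fun _ hb => exists_D_eq_of_isAlt hb⟩
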